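/- Let q be a real number with 0<q<1, let r and f be positive integers, let χ be a Dirichlet character modulo f with values in ℂ, let x>0 be real and w₁,…,w_r positive reals. Then for every s∈ℂ the family (n₁,…,n_r) ↦ (∏_{k=1}^r χ(n_k))·q^{Σ_{m=1}^r w_m n_m}·[x+Σ_{m=1}^r w_m n_m]_q^{-s}, indexed by r-tuples of positive integers, is summable; hence the two-variable multiple Dirichlet q-L-series L_{q,r}(s,x|χ;w₁,…,w_r) converges absolutely for all s∈ℂ. -/

import Mathlib

/-!
Since `0 < q < 1`, the `q`-number `[x + S]_q` with `S = Σ wₘ nₘ ≥ 0` lies in the compact interval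
`[[x]_q, 1/(1-q)]` of positive reals, so `|[x + S]_q^{-s}|` is bounded by a constant. The
character values have modulus at most one, hence the family is dominated by a constant times
`∏ₘ q^{wₘ nₘ}`, a product of convergent geometric series.
-/

open Complex

/-- The `q`-number `[y]_q = (1 - q^y)/(1 - q)`, where `q^y` is the real power. -/
noncomputable def qNum (q y : ℝ) : ℝ := (1 - q ^ y) / (1 - q)

theorem summable_fin_pi_prod_of_nonneg {β : Type*} (n : ℕ) (g : Fin n → β → ℝ)
    (hg : ∀ i, Summable (g i)) (h0 : ∀ i, 0 ≤ g i) :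
    Summable fun ν : Fin n → β => ∏ i, g i (ν i) := by
  induction n with
  | zero => exact Summable.of_finite
  | succ n ih =>
    have htail : Summable fun ν : Fin n → β => ∏ i, g i.succ (ν i) :=
      ih _ (fun i => hg i.succ) fun i => h0 i.succ
    have htail_nonneg : 0 ≤ fun ν : Fin n → β => ∏ i, g i.succ (ν i) :=
      fun ν => Finset.prod_nonneg fun i _ => h0 i.succ (ν i)
    have hpair := (hg 0).mul_of_nonneg htail (h0 0) htail_nonneg
    refine (Equiv.summable_iff (Fin.consEquiv fun _ => β)).mp (hpair.congr fun p => ?_)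
    simp only [Function.comp_apply, Fin.consEquiv_apply, Fin.prod_univ_succ, Fin.cons_zero,
      Fin.cons_succ]

theorem summable_rpow_mul_succ {q w : ℝ} (hq0 : 0 < q) (hq1 : q < 1) (hw : 0 < w) :
    Summable fun k : ℕ => q ^ (w * ((k : ℝ) + 1)) := by
  have hgeom : Summable fun k : ℕ => (q ^ w) ^ (k + 1) :=
    (summable_geometric_of_lt_one (by positivity) (Real.rpow_lt_one hq0.le hq1 hw)).comp_injective
      (add_left_injective 1)
  refine hgeom.congr fun k => ?_
  rw [← Real.rpow_natCast, ← Real.rpow_mul hq0.le]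
  push_cast
  ring_nf

theorem norm_ofReal_cpow_le_max {a b t : ℝ} (ha : 0 < a) (hat : a ≤ t) (htb : t ≤ b) (z : ℂ) :
    ‖(t : ℂ) ^ z‖ ≤ max (a ^ z.re) (b ^ z.re) := by
  rw [norm_cpow_eq_rpow_re_of_pos (ha.trans_le hat)]
  rcases le_or_gt 0 z.re with h | h
  · exact le_max_of_le_right (Real.rpow_le_rpow (ha.le.trans hat) htb h)
  · exact le_max_of_le_left (Real.rpow_le_rpow_of_nonpos ha hat h.le)

section qNum

variable {q : ℝ}

theorem qNum_pos (hq0 : 0 ≤ q) (hq1 : q < 1) {y : ℝ} (hy : 0 < y) : 0 < qNum q y :=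
  div_pos (sub_pos.mpr (Real.rpow_lt_one hq0 hq1 hy)) (sub_pos.mpr hq1)

theorem qNum_le_qNum (hq0 : 0 < q) (hq1 : q < 1) {y z : ℝ} (hyz : y ≤ z) :
    qNum q y ≤ qNum q z := by
  have : q ^ z ≤ q ^ y := Real.rpow_le_rpow_of_exponent_ge hq0 hq1.le hyz
  unfold qNum
  gcongr

theorem qNum_le_one_div_one_sub (hq0 : 0 < q) (hq1 : q < 1) (y : ℝ) : qNum q y ≤ 1 / (1 - q) := by
  have : 0 < q ^ y := Real.rpow_pos_of_pos hq0 y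
  unfold qNum
  gcongr
  linarith

end qNum

theorem stmt13_general (q : ℝ) (hq0 : 0 < q) (hq1 : q < 1) (r f : ℕ)
    (χ : DirichletCharacter ℂ f) (x : ℝ) (hx : 0 < x) (w : Fin r → ℝ) (hw : ∀ j, 0 < w j) :
    ∀ s : ℂ, Summable (fun ν : Fin r → ℕ => (∏ k, χ ((ν k + 1 : ℕ) : ZMod f)) *
      ((q ^ (∑ m, w m * ((ν m : ℝ) + 1)) : ℝ) : ℂ) *
      ((qNum q (x + ∑ m, w m * ((ν m : ℝ) + 1)) : ℝ) : ℂ) ^ (-s)) := by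
  intro s
  set M := max (qNum q x ^ (-s).re) ((1 / (1 - q)) ^ (-s).re)
  have hmajorant : Summable fun ν : Fin r → ℕ => M * ∏ m, q ^ (w m * ((ν m : ℝ) + 1)) :=
    (summable_fin_pi_prod_of_nonneg r _ (fun m => summable_rpow_mul_succ hq0 hq1 (hw m))
      fun m k => (Real.rpow_pos_of_pos hq0 _).le).mul_left M
  refine Summable.of_norm_bounded hmajorant fun ν => ?_
  set S := ∑ m, w m * ((ν m : ℝ) + 1)
  have hS : 0 ≤ S := Finset.sum_nonneg fun m _ => mul_nonneg (hw m).le (by positivity)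
  have hχ : ‖∏ k, χ ((ν k + 1 : ℕ) : ZMod f)‖ ≤ 1 := by
    rw [norm_prod]
    exact Finset.prod_le_one (fun k _ => norm_nonneg _) fun k _ => χ.norm_le_one _
  have hpow : ‖((qNum q (x + S) : ℝ) : ℂ) ^ (-s)‖ ≤ M :=
    norm_ofReal_cpow_le_max (qNum_pos hq0.le hq1 hx) (qNum_le_qNum hq0 hq1 (by linarith))
      (qNum_le_one_div_one_sub hq0 hq1 _) (-s)
  calc _ = ‖∏ k, χ ((ν k + 1 : ℕ) : ZMod f)‖ * q ^ S * ‖((qNum q (x + S) : ℝ) : ℂ) ^ (-s)‖ := by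
        rw [norm_mul, norm_mul, norm_real, Real.norm_of_nonneg (by positivity)]
    _ ≤ 1 * q ^ S * M := by gcongr
    _ = M * ∏ m, q ^ (w m * ((ν m : ℝ) + 1)) := by
        rw [one_mul, mul_comm, Real.rpow_sum_of_pos hq0]

/-- For `0 < q < 1` the family defining the two-variable multiple Dirichlet `q`-`L`-series
`L_{q,r}(s, x | χ; w₁,…,w_r)`, indexed by `r`-tuples of positive integers, is summable for
every `s ∈ ℂ`. -/
theorem stmt13 (q : ℝ) (hq0 : 0 < q) (hq1 : q < 1) (r f : ℕ) (hr : 0 < r) (hf : 0 < f)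
    (χ : DirichletCharacter ℂ f) (x : ℝ) (hx : 0 < x) (w : Fin r → ℝ) (hw : ∀ j, 0 < w j) :
    ∀ s : ℂ, Summable (fun ν : Fin r → ℕ => (∏ k, χ ((ν k + 1 : ℕ) : ZMod f)) *
      ((q ^ (∑ m, w m * ((ν m : ℝ) + 1)) : ℝ) : ℂ) *
      ((qNum q (x + ∑ m, w m * ((ν m : ℝ) + 1)) : ℝ) : ℂ) ^ (-s)) :=
  stmt13_general q hq0 hq1 r f χ x hx w hw
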